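/- arXiv:2410.22024 — 6 statements merged into one kernel-verified Lean document; each statement's English description precedes it below -/
import Mathlib

section
/- Reweighing lemma: Let S be a finite set, f, g : S → ℝ with f, g ≥ 0, let S₀ ⊆ S and f₀ : S₀ → ℝ satisfy: (i) g(s) > 0 for all s ∈ S \ S₀; (ii) max of g on S₀ is at most min of g on S \ S₀; (iii) f(s) ≤ f₀(s) for all s ∈ S₀; (iv) Σ_{s ∈ S₀} f₀(s)·g(s) ≥ Σ_{s ∈ S} f(s)·g(s). If S \ S₀ is nonempty, then Σ_{s ∈ S} f(s) ≤ Σ_{s ∈ S₀} f₀(s). -/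
/-- Reweighing lemma: if `g > 0` off `S₀`, `g` on `S₀` is at most `g` off `S₀`,
`f ≤ f₀` on `S₀`, and the `g`-weighted sum of `f₀` over `S₀` dominates that of `f` over `S`,
then `Σ_{s ∈ S} f(s) ≤ Σ_{s ∈ S₀} f₀(s)`, provided `S \ S₀` is nonempty. -/
theorem reweighing_lemma {α : Type*} [DecidableEq α] (S S₀ : Finset α)
    (f g f₀ : α → ℝ) (hS₀ : S₀ ⊆ S)
    (hf : ∀ s ∈ S, 0 ≤ f s) (hg : ∀ s ∈ S, 0 ≤ g s)
    (hgpos : ∀ s ∈ S \ S₀, 0 < g s)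
    (hgle : ∀ s ∈ S₀, ∀ t ∈ S \ S₀, g s ≤ g t)
    (hff₀ : ∀ s ∈ S₀, f s ≤ f₀ s)
    (hsum : ∑ s ∈ S, f s * g s ≤ ∑ s ∈ S₀, f₀ s * g s)
    (hne : (S \ S₀).Nonempty) :
    ∑ s ∈ S, f s ≤ ∑ s ∈ S₀, f₀ s := by
  obtain ⟨t₀, ht₀, hmin⟩ := Finset.exists_min_image (S \ S₀) g hne
  have hm : 0 < g t₀ := hgpos _ ht₀
  have hsplit : ∑ s ∈ S \ S₀, f s * g s + ∑ s ∈ S₀, f s * g s = ∑ s ∈ S, f s * g s :=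
    Finset.sum_sdiff hS₀
  have h3 : ∑ s ∈ S \ S₀, f s * g s ≤ ∑ s ∈ S₀, (f₀ s - f s) * g s := by
    have : ∑ s ∈ S₀, (f₀ s - f s) * g s
        = ∑ s ∈ S₀, f₀ s * g s - ∑ s ∈ S₀, f s * g s := by
      rw [← Finset.sum_sub_distrib]
      exact Finset.sum_congr rfl fun s _ => by ring
    linarith
  have h1 : g t₀ * ∑ s ∈ S \ S₀, f s ≤ ∑ s ∈ S \ S₀, f s * g s := by
    rw [Finset.mul_sum]
    refine Finset.sum_le_sum fun s hs => ?_
    rw [mul_comm]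
    exact mul_le_mul_of_nonneg_left (hmin s hs) (hf s (Finset.mem_sdiff.mp hs).1)
  have h2 : ∑ s ∈ S₀, (f₀ s - f s) * g s ≤ g t₀ * ∑ s ∈ S₀, (f₀ s - f s) := by
    rw [Finset.mul_sum]
    refine Finset.sum_le_sum fun s hs => ?_
    rw [mul_comm (g t₀)]
    exact mul_le_mul_of_nonneg_left (hgle s hs t₀ ht₀) (by linarith [hff₀ s hs])
  have key : ∑ s ∈ S \ S₀, f s ≤ ∑ s ∈ S₀, (f₀ s - f s) :=
    le_of_mul_le_mul_left (by linarith) hm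
  have hsplit2 : ∑ s ∈ S \ S₀, f s + ∑ s ∈ S₀, f s = ∑ s ∈ S, f s :=
    Finset.sum_sdiff hS₀
  have : ∑ s ∈ S₀, (f₀ s - f s) = ∑ s ∈ S₀, f₀ s - ∑ s ∈ S₀, f s :=
    Finset.sum_sub_distrib f₀ f
  linarith
end

section
/- Consider the coloring c₀ of [n] that assigns color 1 to odd i with i ≤ 2n/5, color 2 to odd i with i > 2n/5, and color 3 to even i. The number of rainbow Schur triples (ordered triples (x,y,z) in [n]³ with x+y=z and c₀(x), c₀(y), c₀(z) pairwise distinct) is (1/5 + o(1))·n², i.e., for every ε > 0 there exists N such that for all n ≥ N the count is between (1/5 - ε)n² and (1/5 + ε)n². -/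
open Finset
set_option maxHeartbeats 1000000

private def cc (n i : ℕ) : Fin 3 :=
  if Odd i ∧ 5 * i ≤ 2 * n then 1 else if Odd i then 2 else 3

private lemma cc_val (n i : ℕ) :
    (cc n i).val = if i % 2 = 1 then (if 5 * i ≤ 2 * n then 1 else 2) else 0 := by
  unfold cc
  rcases Nat.even_or_odd i with h | h
  · simp [Nat.not_odd_iff_even.2 h, Nat.even_iff.1 h]
  · simp only [h, true_and, Nat.odd_iff.1 h, if_true]
    split_ifs <;> rfl

private lemma color_iff (n x y : ℕ) :
    (cc n x ≠ cc n y ∧ cc n x ≠ cc n (x + y) ∧ cc n y ≠ cc n (x + y)) ↔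
      ((x % 2 = 1 ∧ 5 * x ≤ 2 * n ∧ y % 2 = 1 ∧ 2 * n < 5 * y) ∨
       (y % 2 = 1 ∧ 5 * y ≤ 2 * n ∧ x % 2 = 1 ∧ 2 * n < 5 * x) ∨
       (x % 2 = 1 ∧ 5 * x ≤ 2 * n ∧ y % 2 = 0 ∧ 2 * n < 5 * (x + y)) ∨
       (x % 2 = 0 ∧ y % 2 = 1 ∧ 5 * y ≤ 2 * n ∧ 2 * n < 5 * (x + y))) := by
  simp only [Ne, Fin.ext_iff, cc_val]
  split_ifs <;> simp_all <;> omega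

private def Tset (n : ℕ) : Finset (ℕ × ℕ × ℕ) :=
  (Finset.Icc 1 n ×ˢ Finset.Icc 1 n ×ˢ Finset.Icc 1 n).filter
    (fun t : ℕ × ℕ × ℕ => t.1 + t.2.1 = t.2.2 ∧
      cc n t.1 ≠ cc n t.2.1 ∧ cc n t.1 ≠ cc n t.2.2 ∧ cc n t.2.1 ≠ cc n t.2.2)

private def Sset (n : ℕ) : Finset (ℕ × ℕ) :=
  (Finset.Icc 1 n ×ˢ Finset.Icc 1 n).filter
    (fun p => p.1 + p.2 ≤ n ∧ cc n p.1 ≠ cc n p.2 ∧ cc n p.1 ≠ cc n (p.1 + p.2) ∧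
      cc n p.2 ≠ cc n (p.1 + p.2))

private lemma TS (n : ℕ) : (Tset n).card = (Sset n).card := by
  refine Finset.card_bij' (fun t _ => (t.1, t.2.1)) (fun p _ => (p.1, p.2, p.1 + p.2)) ?_ ?_ ?_ ?_
  · intro t ht
    simp only [Tset, mem_filter, mem_product, mem_Icc] at ht
    obtain ⟨⟨hx, hy, hz⟩, heq, hc⟩ := ht
    simp only [Sset, mem_filter, mem_product, mem_Icc]
    refine ⟨⟨hx, hy⟩, by omega, ?_⟩
    rw [heq]
    exact hc
  · intro p hp
    simp only [Sset, mem_filter, mem_product, mem_Icc] at hp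
    obtain ⟨⟨hx, hy⟩, hs, hc⟩ := hp
    simp only [Tset, mem_filter, mem_product, mem_Icc]
    exact ⟨⟨hx, hy, by omega⟩, trivial, hc⟩
  · intro t ht
    simp only [Tset, mem_filter, mem_product, mem_Icc] at ht
    obtain ⟨-, heq, -⟩ := ht
    exact congrArg (fun z => (t.1, t.2.1, z)) heq
  · intro p _
    rfl

private def pA (n : ℕ) : Finset (ℕ × ℕ) :=
  (Finset.Icc 1 n ×ˢ Finset.Icc 1 n).filter fun p =>
    p.1 % 2 = 1 ∧ 5 * p.1 ≤ 2 * n ∧ p.2 % 2 = 1 ∧ 2 * n < 5 * p.2 ∧ p.1 + p.2 ≤ n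

private def pA' (n : ℕ) : Finset (ℕ × ℕ) :=
  (Finset.Icc 1 n ×ˢ Finset.Icc 1 n).filter fun p =>
    p.2 % 2 = 1 ∧ 5 * p.2 ≤ 2 * n ∧ p.1 % 2 = 1 ∧ 2 * n < 5 * p.1 ∧ p.2 + p.1 ≤ n

private def pB (n : ℕ) : Finset (ℕ × ℕ) :=
  (Finset.Icc 1 n ×ˢ Finset.Icc 1 n).filter fun p =>
    p.1 % 2 = 1 ∧ 5 * p.1 ≤ 2 * n ∧ p.2 % 2 = 0 ∧ 2 * n < 5 * (p.1 + p.2) ∧ p.1 + p.2 ≤ n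

private def pB' (n : ℕ) : Finset (ℕ × ℕ) :=
  (Finset.Icc 1 n ×ˢ Finset.Icc 1 n).filter fun p =>
    p.2 % 2 = 1 ∧ 5 * p.2 ≤ 2 * n ∧ p.1 % 2 = 0 ∧ 2 * n < 5 * (p.2 + p.1) ∧ p.2 + p.1 ≤ n

private lemma S_split (n : ℕ) : Sset n = ((pA n ∪ pA' n) ∪ (pB n ∪ pB' n)) := by
  ext ⟨x, y⟩
  simp only [Sset, pA, pA', pB, pB', mem_union, mem_filter, mem_product, mem_Icc]
  rw [color_iff n x y]
  omega

private lemma swap_card (P : ℕ × ℕ → Prop) [DecidablePred P] (s t : Finset ℕ) :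
    ((s ×ˢ t).filter P).card = ((t ×ˢ s).filter fun p => P (p.2, p.1)).card := by
  refine Finset.card_bij' (fun p _ => (p.2, p.1)) (fun p _ => (p.2, p.1)) ?_ ?_ ?_ ?_
  · rintro ⟨a, b⟩ h
    simp only [mem_filter, mem_product] at h ⊢
    exact ⟨⟨h.1.2, h.1.1⟩, h.2⟩
  · rintro ⟨a, b⟩ h
    simp only [mem_filter, mem_product] at h ⊢
    exact ⟨⟨h.1.2, h.1.1⟩, h.2⟩
  · rintro ⟨a, b⟩ _; rfl
  · rintro ⟨a, b⟩ _; rfl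

private lemma pA'_card (n : ℕ) : (pA' n).card = (pA n).card := by
  unfold pA pA'
  rw [swap_card]

private lemma pB'_card (n : ℕ) : (pB' n).card = (pB n).card := by
  unfold pB pB'
  rw [swap_card]

private lemma step1 (n : ℕ) : (Tset n).card = 2 * (pA n).card + 2 * (pB n).card := by
  rw [TS, S_split]
  have d1 : Disjoint (pA n) (pA' n) := by
    rw [Finset.disjoint_left]
    rintro ⟨x, y⟩ h h'
    simp only [pA, pA', mem_filter] at h h'
    omega
  have d2 : Disjoint (pB n) (pB' n) := by
    rw [Finset.disjoint_left]
    rintro ⟨x, y⟩ h h'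
    simp only [pB, pB', mem_filter] at h h'
    omega
  have d3 : Disjoint (pA n ∪ pA' n) (pB n ∪ pB' n) := by
    rw [Finset.disjoint_left]
    rintro ⟨x, y⟩ h h'
    simp only [pA, pA', pB, pB', mem_union, mem_filter] at h h'
    omega
  rw [Finset.card_union_of_disjoint d3, Finset.card_union_of_disjoint d1,
    Finset.card_union_of_disjoint d2, pA'_card, pB'_card]
  ring

private lemma even_Ioc_card (a b : ℕ) (h : a ≤ b) :
    ((Finset.Ioc a b).filter fun y => y % 2 = 0).card = b / 2 - a / 2 := by
  have e0 : ∀ c : ℕ, ((Finset.Ioc 0 c).filter fun y => y % 2 = 0).card = c / 2 := by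
    intro c
    have := Nat.Ioc_filter_dvd_card_eq_div c 2
    simpa [Nat.dvd_iff_mod_eq_zero] using this
  have hsplit : Finset.Ioc 0 a ∪ Finset.Ioc a b = Finset.Ioc 0 b :=
    Finset.Ioc_union_Ioc_eq_Ioc (Nat.zero_le a) h
  have hdisj : Disjoint ((Finset.Ioc 0 a).filter fun y => y % 2 = 0)
      ((Finset.Ioc a b).filter fun y => y % 2 = 0) := by
    rw [Finset.disjoint_left]
    intro x hx hx'
    simp only [mem_filter, mem_Ioc] at hx hx'
    omega
  have hb := e0 b
  rw [← hsplit, Finset.filter_union, Finset.card_union_of_disjoint hdisj, e0 a] at hb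
  omega

private lemma odd_Ioc_card (a b : ℕ) (h : a ≤ b) :
    ((Finset.Ioc a b).filter fun y => y % 2 = 1).card = (b + 1) / 2 - (a + 1) / 2 := by
  have h1 := Finset.card_filter_add_card_filter_not
    (s := Finset.Ioc a b) (p := fun y => y % 2 = 0)
  have h2 : (Finset.Ioc a b).filter (fun y => ¬ y % 2 = 0) =
      (Finset.Ioc a b).filter fun y => y % 2 = 1 := by
    apply Finset.filter_congr
    intro y _
    omega
  rw [h2, even_Ioc_card a b h, Nat.card_Ioc] at h1
  omega

private lemma card_filter_prod (s t : Finset ℕ) (Q : ℕ → ℕ → Prop) [∀ a b, Decidable (Q a b)] :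
    ((s ×ˢ t).filter fun p => Q p.1 p.2).card = ∑ x ∈ s, (t.filter fun y => Q x y).card := by
  rw [Finset.card_eq_sum_card_fiberwise
    (f := fun p : ℕ × ℕ => p.1) (t := s)
    (fun p hp => by simp only [Finset.mem_coe, mem_filter, mem_product] at hp; exact hp.1.1)]
  apply Finset.sum_congr rfl
  intro x hx
  apply Finset.card_bij (fun p (_ : p ∈ ((s ×ˢ t).filter fun p => Q p.1 p.2).filter
      fun p => p.1 = x) => p.2)
  · rintro ⟨a, b⟩ hp
    simp only [mem_filter, mem_product] at hp ⊢
    obtain ⟨⟨⟨_, hbt⟩, hq⟩, hax⟩ := hp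
    subst hax
    exact ⟨hbt, hq⟩
  · rintro ⟨a, b⟩ h1 ⟨a', b'⟩ h2 heq
    simp only [mem_filter, mem_product] at h1 h2
    simp only at heq
    obtain ⟨_, h1x⟩ := h1
    obtain ⟨_, h2x⟩ := h2
    subst h1x; subst h2x; subst heq; rfl
  · intro b hb
    simp only [mem_filter] at hb
    refine ⟨(x, b), ?_, rfl⟩
    simp only [mem_filter, mem_product]
    exact ⟨⟨⟨hx, hb.1⟩, hb.2⟩, trivial⟩

private lemma pA_card (n : ℕ) (hn : 100 ≤ n) :
    (pA n).card = ∑ x ∈ (Finset.Icc 1 n).filter (fun x => x % 2 = 1 ∧ 5 * x ≤ 2 * n),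
      ((n - x + 1) / 2 - (2 * n / 5 + 1) / 2) := by
  unfold pA
  rw [card_filter_prod (Finset.Icc 1 n) (Finset.Icc 1 n)
    (fun x y => x % 2 = 1 ∧ 5 * x ≤ 2 * n ∧ y % 2 = 1 ∧ 2 * n < 5 * y ∧ x + y ≤ n)]
  have hres := Finset.sum_filter_of_ne (s := Finset.Icc 1 n)
    (f := fun x => ((Finset.Icc 1 n).filter
      (fun y => x % 2 = 1 ∧ 5 * x ≤ 2 * n ∧ y % 2 = 1 ∧ 2 * n < 5 * y ∧ x + y ≤ n)).card)
    (p := fun x => x % 2 = 1 ∧ 5 * x ≤ 2 * n) (by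
      intro x _ hne
      by_contra hc
      apply hne
      rw [Finset.card_eq_zero, Finset.filter_eq_empty_iff]
      intro y _
      omega)
  rw [← hres]
  apply Finset.sum_congr rfl
  intro x hx
  simp only [mem_filter, mem_Icc] at hx
  have heq : (Finset.Icc 1 n).filter
      (fun y => x % 2 = 1 ∧ 5 * x ≤ 2 * n ∧ y % 2 = 1 ∧ 2 * n < 5 * y ∧ x + y ≤ n) =
      (Finset.Ioc (2 * n / 5) (n - x)).filter fun y => y % 2 = 1 := by
    ext y
    simp only [mem_filter, mem_Icc, mem_Ioc]
    omega
  rw [heq, odd_Ioc_card _ _ (by omega)]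

private lemma pB_card (n : ℕ) (hn : 100 ≤ n) :
    (pB n).card = ∑ x ∈ (Finset.Icc 1 n).filter (fun x => x % 2 = 1 ∧ 5 * x ≤ 2 * n),
      ((n - x) / 2 - (2 * n / 5 - x) / 2) := by
  unfold pB
  rw [card_filter_prod (Finset.Icc 1 n) (Finset.Icc 1 n)
    (fun x y => x % 2 = 1 ∧ 5 * x ≤ 2 * n ∧ y % 2 = 0 ∧ 2 * n < 5 * (x + y) ∧ x + y ≤ n)]
  have hres := Finset.sum_filter_of_ne (s := Finset.Icc 1 n)
    (f := fun x => ((Finset.Icc 1 n).filter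
      (fun y => x % 2 = 1 ∧ 5 * x ≤ 2 * n ∧ y % 2 = 0 ∧ 2 * n < 5 * (x + y) ∧ x + y ≤ n)).card)
    (p := fun x => x % 2 = 1 ∧ 5 * x ≤ 2 * n) (by
      intro x _ hne
      by_contra hc
      apply hne
      rw [Finset.card_eq_zero, Finset.filter_eq_empty_iff]
      intro y _
      omega)
  rw [← hres]
  apply Finset.sum_congr rfl
  intro x hx
  simp only [mem_filter, mem_Icc] at hx
  have heq : (Finset.Icc 1 n).filter
      (fun y => x % 2 = 1 ∧ 5 * x ≤ 2 * n ∧ y % 2 = 0 ∧ 2 * n < 5 * (x + y) ∧ x + y ≤ n) =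
      (Finset.Ioc (2 * n / 5 - x) (n - x)).filter fun y => y % 2 = 0 := by
    ext y
    simp only [mem_filter, mem_Icc, mem_Ioc]
    omega
  rw [heq, even_Ioc_card _ _ (by omega)]

private lemma X_eq (n : ℕ) : (Finset.Icc 1 n).filter (fun x => x % 2 = 1 ∧ 5 * x ≤ 2 * n) =
    (Finset.range ((2 * n / 5 + 1) / 2)).image (fun k => 2 * k + 1) := by
  ext x
  simp only [mem_filter, mem_Icc, mem_image, mem_range]
  constructor
  · rintro ⟨⟨h1, h2⟩, h3, h4⟩
    exact ⟨x / 2, by omega, by omega⟩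
  · rintro ⟨k, hk, rfl⟩
    omega

private lemma X_card (n : ℕ) :
    ((Finset.Icc 1 n).filter (fun x => x % 2 = 1 ∧ 5 * x ≤ 2 * n)).card =
      (2 * n / 5 + 1) / 2 := by
  rw [X_eq, Finset.card_image_of_injective _ (fun a b hab => by omega), Finset.card_range]

private lemma sum_odds (K : ℕ) : ∑ k ∈ Finset.range K, (2 * k + 1) = K * K := by
  induction K with
  | zero => simp
  | succ k ih => rw [Finset.sum_range_succ, ih]; ring

private lemma X_sum (n : ℕ) :
    ∑ x ∈ (Finset.Icc 1 n).filter (fun x => x % 2 = 1 ∧ 5 * x ≤ 2 * n), x =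
      ((2 * n / 5 + 1) / 2) * ((2 * n / 5 + 1) / 2) := by
  rw [X_eq, Finset.sum_image (fun a _ b _ hab => by omega), sum_odds]

private lemma key (n : ℕ) (hn : 100 ≤ n) (ε : ℝ) (hεn : 10 ≤ ε * n) :
    (1/5 - ε) * (n : ℝ)^2 ≤ ((Tset n).card : ℝ) ∧
      ((Tset n).card : ℝ) ≤ (1/5 + ε) * (n : ℝ)^2 := by
  have hT : (Tset n).card = ∑ x ∈ (Finset.Icc 1 n).filter (fun x => x % 2 = 1 ∧ 5 * x ≤ 2 * n),
      (2 * ((n - x + 1) / 2 - (2 * n / 5 + 1) / 2) + 2 * ((n - x) / 2 - (2 * n / 5 - x) / 2)) := by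
    rw [step1, pA_card n hn, pB_card n hn, Finset.mul_sum, Finset.mul_sum,
      ← Finset.sum_add_distrib]
  have hlow : ∑ x ∈ (Finset.Icc 1 n).filter (fun x => x % 2 = 1 ∧ 5 * x ≤ 2 * n), (2 * n) ≤
      ∑ x ∈ (Finset.Icc 1 n).filter (fun x => x % 2 = 1 ∧ 5 * x ≤ 2 * n),
        ((2 * ((n - x + 1) / 2 - (2 * n / 5 + 1) / 2) + 2 * ((n - x) / 2 - (2 * n / 5 - x) / 2))
          + x + (2 * (2 * n / 5) + 2)) := by
    apply Finset.sum_le_sum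
    intro x hx
    simp only [mem_filter, mem_Icc] at hx
    omega
  have hupp : ∑ x ∈ (Finset.Icc 1 n).filter (fun x => x % 2 = 1 ∧ 5 * x ≤ 2 * n),
        ((2 * ((n - x + 1) / 2 - (2 * n / 5 + 1) / 2) + 2 * ((n - x) / 2 - (2 * n / 5 - x) / 2))
          + x + 2 * (2 * n / 5)) ≤
      ∑ x ∈ (Finset.Icc 1 n).filter (fun x => x % 2 = 1 ∧ 5 * x ≤ 2 * n), (2 * n + 2) := by
    apply Finset.sum_le_sum
    intro x hx
    simp only [mem_filter, mem_Icc] at hx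
    omega
  rw [Finset.sum_add_distrib, Finset.sum_add_distrib, Finset.sum_const, X_sum, ← hT,
    X_card, smul_eq_mul] at hlow
  rw [Finset.sum_add_distrib, Finset.sum_add_distrib, Finset.sum_const, X_sum, ← hT,
    X_card, smul_eq_mul] at hupp
  rw [Finset.sum_const, X_card, smul_eq_mul] at hlow hupp
  -- now pure arithmetic
  set m : ℕ := 2 * n / 5 with hmdef
  set K : ℕ := (m + 1) / 2 with hKdef
  have hm : 5 * m ≤ 2 * n ∧ 2 * n < 5 * m + 5 := by omega
  have hK : 2 * K ≤ m + 1 ∧ m + 1 < 2 * K + 2 := by omega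
  have L : (K : ℝ) * (2 * n) ≤ (Tset n).card + K * K + K * (2 * m + 2) := by
    exact_mod_cast hlow
  have U : ((Tset n).card : ℝ) + K * K + K * (2 * m) ≤ K * (2 * n + 2) := by
    exact_mod_cast hupp
  have hmr1 : 5 * (m : ℝ) ≤ 2 * n := by exact_mod_cast hm.1
  have hmr2 : 2 * (n : ℝ) ≤ 5 * m + 4 := by
    have : 2 * n ≤ 5 * m + 4 := by omega
    exact_mod_cast this
  have hKr1 : 2 * (K : ℝ) ≤ m + 1 := by exact_mod_cast hK.1
  have hKr2 : (m : ℝ) ≤ 2 * K := by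
    have : m ≤ 2 * K := by omega
    exact_mod_cast this
  have hnr : (100 : ℝ) ≤ n := by exact_mod_cast hn
  have hK0 : (0 : ℝ) ≤ K := by positivity
  have hKl : (n : ℝ)/5 - 1 ≤ K := by linarith
  have hKu : (K : ℝ) ≤ n/5 + 1/2 := by linarith
  have hml : 2*(n:ℝ)/5 - 4/5 ≤ m := by linarith
  have hmu : (m : ℝ) ≤ 2*n/5 := by linarith
  have hTl : (K : ℝ) * (2 * n - K - 2 * m - 2) ≤ (Tset n).card := by nlinarith [L]
  have hTu : ((Tset n).card : ℝ) ≤ K * (2 * n + 2 - K - 2 * m) := by nlinarith [U]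
  constructor
  · have h1 : ((n:ℝ)/5 - 1) * (n - 3) ≤ (K : ℝ) * (2 * n - K - 2 * m - 2) := by
      apply mul_le_mul hKl (by linarith) (by linarith) hK0
    nlinarith [mul_le_mul_of_nonneg_right hεn (le_of_lt (show (0:ℝ) < n by linarith))]
  · have h2 : (K : ℝ) * (2 * n + 2 - K - 2 * m) ≤ ((n:ℝ)/5 + 1/2) * (n + 5) := by
      apply mul_le_mul hKu (by linarith) (by linarith) (by linarith)
    nlinarith [mul_le_mul_of_nonneg_right hεn (le_of_lt (show (0:ℝ) < n by linarith))]

/-- Under the coloring `c₀` of `[n]` (color 1 for odd `i ≤ 2n/5`, color 2 for odd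
`i > 2n/5`, color 3 for even `i`), the number of rainbow Schur triples is
`(1/5 + o(1)) n²`. -/
theorem lower_bound_construction_rainbow_count :
    ∀ ε : ℝ, 0 < ε → ∃ N : ℕ, ∀ n : ℕ, N ≤ n →
      let c₀ : ℕ → Fin 3 := fun i => if Odd i ∧ 5 * i ≤ 2 * n then 1 else if Odd i then 2 else 3
      let R := ((Finset.Icc 1 n ×ˢ Finset.Icc 1 n ×ˢ Finset.Icc 1 n).filter
        (fun t : ℕ × ℕ × ℕ => t.1 + t.2.1 = t.2.2 ∧
          c₀ t.1 ≠ c₀ t.2.1 ∧ c₀ t.1 ≠ c₀ t.2.2 ∧ c₀ t.2.1 ≠ c₀ t.2.2)).card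
      (1/5 - ε) * (n : ℝ)^2 ≤ (R : ℝ) ∧ (R : ℝ) ≤ (1/5 + ε) * (n : ℝ)^2 := by
  intro ε hε
  refine ⟨⌈(10:ℝ)/ε⌉₊ + 100, fun n hn => ?_⟩
  have hn100 : 100 ≤ n := by omega
  have hεn : 10 ≤ ε * n := by
    have h1 : ((10:ℝ)/ε) ≤ (⌈(10:ℝ)/ε⌉₊ : ℝ) := Nat.le_ceil _
    have h2 : ((⌈(10:ℝ)/ε⌉₊ + 100 : ℕ) : ℝ) ≤ n := by exact_mod_cast hn
    push_cast at h2
    have h3 : (10:ℝ)/ε ≤ n := by linarith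
    calc (10:ℝ) = ε * (10/ε) := by field_simp
    _ ≤ ε * n := by
        apply mul_le_mul_of_nonneg_left h3 (le_of_lt hε)
  intro c₀ R
  exact key n hn100 ε hεn
end

section
/- Let r : [n] → ℕ satisfy r(z) ≤ z - 1 for all z, and suppose z₀ ∈ [n] satisfies Σ_{z=1}^{n} r(z)(n+1-z) ≤ Σ_{z=z₀}^{n} (z-1)(n+1-z). Then Σ_{z=1}^{n} r(z) ≤ Σ_{z=z₀}^{n} (z-1) = (n(n-1) - (z₀-1)(z₀-2))/2. -/
open Finset

private lemma split_sum {M : Type*} [AddCommMonoid M] (m n : ℕ) (h : m ≤ n) (f : ℕ → M) :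
    ∑ z ∈ Icc 1 n, f z = ∑ z ∈ Icc 1 m, f z + ∑ z ∈ Icc (m+1) n, f z := by
  have e : Icc 1 n = Icc 1 m ∪ Icc (m+1) n := by
    ext x; simp only [mem_Icc, mem_union]; omega
  rw [e, Finset.sum_union (Finset.disjoint_left.mpr fun {a} ha hb => by
    simp only [mem_Icc] at ha hb; omega)]

private lemma gauss_sum (m : ℕ) : (∑ z ∈ Icc 1 m, (z-1)) * 2 = m * (m-1) := by
  induction m with
  | zero => simp
  | succ k ih =>
    rw [Finset.sum_Icc_succ_top (by omega : 1 ≤ k+1)]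
    cases k with
    | zero => simp
    | succ j => simp at ih ⊢; nlinarith [ih]

/-- If `r(z) ≤ z - 1` for all `z ∈ [n]` and
`Σ_{z=1}^n r(z)(n+1-z) ≤ Σ_{z=z₀}^n (z-1)(n+1-z)`, then
`Σ_{z=1}^n r(z) ≤ Σ_{z=z₀}^n (z-1) = (n(n-1) - (z₀-1)(z₀-2))/2`. -/
theorem reweighing_application (n z₀ : ℕ) (r : ℕ → ℕ)
    (hr : ∀ z ∈ Finset.Icc 1 n, r z ≤ z - 1)
    (hz₀ : z₀ ∈ Finset.Icc 1 n)
    (hsum : ∑ z ∈ Finset.Icc 1 n, r z * (n + 1 - z) ≤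
      ∑ z ∈ Finset.Icc z₀ n, (z - 1) * (n + 1 - z)) :
    ∑ z ∈ Finset.Icc 1 n, r z ≤ ∑ z ∈ Finset.Icc z₀ n, (z - 1) ∧
      ∑ z ∈ Finset.Icc z₀ n, (z - 1) = (n * (n - 1) - (z₀ - 1) * (z₀ - 2)) / 2 := by
  obtain ⟨h1, hn⟩ := Finset.mem_Icc.mp hz₀
  obtain ⟨m, rfl⟩ : ∃ m, z₀ = m + 1 := ⟨z₀ - 1, by omega⟩
  have hmn : m ≤ n := by omega
  constructor
  · -- main inequality
    set w : ℕ → ℤ := fun z => (n : ℤ) + 1 - z with hw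
    -- cast hsum to ℤ
    have hsumZ : ∑ z ∈ Icc 1 n, (r z : ℤ) * w z ≤ ∑ z ∈ Icc (m+1) n, ((z : ℤ) - 1) * w z := by
      have hL : ((∑ z ∈ Icc 1 n, r z * (n + 1 - z) : ℕ) : ℤ)
          = ∑ z ∈ Icc 1 n, (r z : ℤ) * w z := by
        push_cast
        refine Finset.sum_congr rfl fun z hz => ?_
        have := (Finset.mem_Icc.mp hz).2
        have : ((n + 1 - z : ℕ) : ℤ) = w z := by simp only [hw]; omega
        rw [this]
      have hR : ((∑ z ∈ Icc (m+1) n, (z - 1) * (n + 1 - z) : ℕ) : ℤ)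
          = ∑ z ∈ Icc (m+1) n, ((z : ℤ) - 1) * w z := by
        push_cast
        refine Finset.sum_congr rfl fun z hz => ?_
        obtain ⟨hz1, hz2⟩ := Finset.mem_Icc.mp hz
        have e1 : ((z - 1 : ℕ) : ℤ) = (z : ℤ) - 1 := by omega
        have e2 : ((n + 1 - z : ℕ) : ℤ) = w z := by simp only [hw]; omega
        rw [e1, e2]
      rw [← hL, ← hR]
      exact_mod_cast hsum
    -- split LHS
    rw [split_sum m n hmn] at hsumZ
    have hstep : ∑ z ∈ Icc 1 m, (r z : ℤ) * w z ≤
        ∑ z ∈ Icc (m+1) n, (((z : ℤ) - 1) - r z) * w z := by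
      have := Finset.sum_sub_distrib (s := Icc (m+1) n)
        (f := fun z => ((z:ℤ)-1) * w z) (g := fun z => (r z : ℤ) * w z)
      calc ∑ z ∈ Icc 1 m, (r z : ℤ) * w z
          ≤ ∑ z ∈ Icc (m+1) n, ((z : ℤ) - 1) * w z - ∑ z ∈ Icc (m+1) n, (r z : ℤ) * w z := by
            linarith [hsumZ]
        _ = ∑ z ∈ Icc (m+1) n, (((z : ℤ) - 1) - r z) * w z := by
            rw [← Finset.sum_sub_distrib]; congr 1; ext z; ring
    -- lower bound LHS, upper bound RHS, by w monotone
    have hA : w (m+1) * ∑ z ∈ Icc 1 m, (r z : ℤ) ≤ ∑ z ∈ Icc 1 m, (r z : ℤ) * w z := by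
      rw [Finset.mul_sum]
      refine Finset.sum_le_sum fun z hz => ?_
      obtain ⟨hz1, hz2⟩ := Finset.mem_Icc.mp hz
      have hwle : w (m+1) ≤ w z := by simp only [hw]; push_cast; omega
      have : (0:ℤ) ≤ r z := by positivity
      nlinarith
    have hB : ∑ z ∈ Icc (m+1) n, (((z : ℤ) - 1) - r z) * w z ≤
        w (m+1) * ∑ z ∈ Icc (m+1) n, (((z : ℤ) - 1) - r z) := by
      rw [Finset.mul_sum]
      refine Finset.sum_le_sum fun z hz => ?_
      obtain ⟨hz1, hz2⟩ := Finset.mem_Icc.mp hz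
      have hwle : w z ≤ w (m+1) := by simp only [hw]; push_cast; omega
      have hrz := hr z (Finset.mem_Icc.mpr ⟨by omega, hz2⟩)
      have hpos : (0:ℤ) ≤ ((z : ℤ) - 1) - r z := by omega
      nlinarith
    have hwpos : (0:ℤ) < w (m+1) := by simp only [hw]; push_cast; omega
    have hkey : ∑ z ∈ Icc 1 m, (r z : ℤ) ≤ ∑ z ∈ Icc (m+1) n, (((z : ℤ) - 1) - r z) := by
      have := le_trans hA (le_trans hstep hB)
      exact le_of_mul_le_mul_left this hwpos
    -- conclude in ℤ then ℕ
    have hfinal : ((∑ z ∈ Icc 1 n, r z : ℕ) : ℤ) ≤ ((∑ z ∈ Icc (m+1) n, (z - 1) : ℕ) : ℤ) := by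
      push_cast
      rw [split_sum m n hmn (fun z => (r z : ℤ))]
      have e3 : ∑ z ∈ Icc (m+1) n, ((z - 1 : ℕ) : ℤ) = ∑ z ∈ Icc (m+1) n, ((z : ℤ) - 1) := by
        refine Finset.sum_congr rfl fun z hz => ?_
        have := (Finset.mem_Icc.mp hz).1; omega
      rw [e3]
      have e4 := Finset.sum_sub_distrib (s := Icc (m+1) n)
        (f := fun z => (z:ℤ)-1) (g := fun z => (r z : ℤ))
      linarith [hkey, e4]
    exact_mod_cast hfinal
  · -- closed form
    have hsplit := split_sum m n hmn (fun z => z - 1)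
    have g1 := gauss_sum n
    have g2 := gauss_sum m
    simp only [Nat.add_sub_cancel]
    rw [show m + 1 - 2 = m - 1 by omega]
    omega
end

section
/- If α ∈ [0,1] satisfies α³/3 - α²/2 + 1/10 ≤ 0, then α ≥ sin(π/6 - arctan(2√6)/3) + 1/2, and in particular α > 0.56706. -/
/-- If `α ∈ [0,1]` satisfies `α³/3 - α²/2 + 1/10 ≤ 0`, then
`α ≥ sin(π/6 - arctan(2√6)/3) + 1/2 > 0.56706`. -/
theorem cubic_root_bound (α : ℝ) (h0 : 0 ≤ α) (h1 : α ≤ 1)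
    (h : α^3 / 3 - α^2 / 2 + 1/10 ≤ 0) :
    α ≥ Real.sin (Real.pi / 6 - Real.arctan (2 * Real.sqrt 6) / 3) + 1/2 ∧
      α > 0.56706 := by
  set s := Real.sin (Real.pi / 6 - Real.arctan (2 * Real.sqrt 6) / 3) with hs
  have h6 : Real.sqrt 6 ^ 2 = 6 := Real.sq_sqrt (by norm_num)
  have hatan_nonneg : 0 ≤ Real.arctan (2 * Real.sqrt 6) :=
    Real.arctan_zero ▸ Real.arctan_strictMono.monotone (by positivity)
  have hatan_lt : Real.arctan (2 * Real.sqrt 6) < Real.pi / 2 :=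
    Real.arctan_lt_pi_div_two _
  have hpi : 0 < Real.pi := Real.pi_pos
  -- the angle is in [0, π/6]
  have hang0 : 0 ≤ Real.pi / 6 - Real.arctan (2 * Real.sqrt 6) / 3 := by linarith
  have hang1 : Real.pi / 6 - Real.arctan (2 * Real.sqrt 6) / 3 ≤ Real.pi / 6 := by
    linarith
  have hs0 : 0 ≤ s := by
    rw [hs]
    exact Real.sin_nonneg_of_nonneg_of_le_pi hang0 (by linarith)
  have hs12 : s ≤ 1/2 := by
    have := Real.sin_le_sin_of_le_of_le_pi_div_two (x := Real.pi / 6 - Real.arctan (2 * Real.sqrt 6) / 3)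
      (y := Real.pi / 6) (by linarith) (by linarith) hang1
    rw [Real.sin_pi_div_six] at this
    linarith [hs ▸ this]
  have htrip : 3 * s - 4 * s ^ 3 = 1 / 5 := by
    have key := Real.sin_three_mul (Real.pi / 6 - Real.arctan (2 * Real.sqrt 6) / 3)
    have h3 : 3 * (Real.pi / 6 - Real.arctan (2 * Real.sqrt 6) / 3)
        = Real.pi / 2 - Real.arctan (2 * Real.sqrt 6) := by ring
    rw [h3, Real.sin_pi_div_two_sub, Real.cos_arctan] at key
    have h25 : Real.sqrt (1 + (2 * Real.sqrt 6) ^ 2) = 5 := by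
      rw [show 1 + (2 * Real.sqrt 6) ^ 2 = 25 by nlinarith]
      rw [show (25 : ℝ) = 5 ^ 2 by norm_num]
      exact Real.sqrt_sq (by norm_num)
    rw [h25] at key
    rw [hs]
    linarith
  have hsge : s > 0.06706 := by
    by_contra hle
    push_neg at hle
    have hfac : (0:ℝ) ≤ 3 - 4 * ((0.06706:ℝ)^2 + 0.06706 * s + s^2) := by nlinarith
    nlinarith [mul_nonneg (sub_nonneg.2 hle) hfac]
  have hr0 : (s + 1/2)^3 / 3 - (s + 1/2)^2 / 2 + 1/10 = 0 := by
    linear_combination (-1/12 : ℝ) * htrip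
  have hαge : α ≥ s + 1/2 := by
    by_contra hc
    push_neg at hc
    have hq : 0 < 3 * (α + (s + 1/2)) - 2 * (α^2 + α * (s + 1/2) + (s + 1/2)^2) := by
      nlinarith [mul_nonneg h0 (sub_nonneg.2 h1), mul_nonneg hs0 (show (0:ℝ) ≤ 1 - (s + 1/2) by linarith),
        mul_nonneg h0 (show (0:ℝ) ≤ 1 - (s + 1/2) by linarith),
        mul_pos (show (0:ℝ) < s + 1/2 by linarith) (show (0:ℝ) < 1 - α by linarith)]
    nlinarith [hr0, mul_pos (sub_pos.2 hc) hq]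
  exact ⟨hαge, by nlinarith⟩
end

section
/- For every k-coloring c of [n], the number of rainbow k-term arithmetic progressions in [n] is at most n²/(2k). Consequently, the fraction of k-APs that are rainbow is at most (k-1)/k + o(1). -/
open Classical


open Finset

lemma class_card (m n r : ℕ) (hm : 0 < m) (hr1 : 1 ≤ r) (hrm : r ≤ m) :
    ((Finset.Icc 1 n).filter (fun i => i % m = r % m)).card = (n + m - r) / m := by
  have himage : ((Finset.Icc 1 n).filter (fun i => i % m = r % m))
      = (Finset.range ((n + m - r) / m)).image (fun j => r + m * j) := by
    ext i
    simp only [mem_filter, mem_Icc, mem_image, mem_range]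
    constructor
    · rintro ⟨⟨h1, h2⟩, h3⟩
      have hle : r ≤ i := by
        rcases Nat.lt_or_ge i r with hlt | hge
        · exfalso
          have him : i % m = i := Nat.mod_eq_of_lt (lt_of_lt_of_le hlt hrm)
          rcases Nat.lt_or_ge r m with hrm' | hrm''
          · have : r % m = r := Nat.mod_eq_of_lt hrm'
            omega
          · have hrm2 : r = m := le_antisymm hrm hrm''
            have : r % m = 0 := by rw [hrm2]; exact Nat.mod_self m
            omega
        · exact hge
      have hdvd : m ∣ i - r := (Nat.modEq_iff_dvd' hle).mp h3.symm
      obtain ⟨j, hj⟩ := hdvd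
      refine ⟨j, ?_, by omega⟩
      have hmj : m * j = j * m := Nat.mul_comm m j
      have h4 : (j+1) * m ≤ n + m - r := by
        have : j * m + m ≤ n + m - r := by omega
        nlinarith
      exact Nat.lt_of_lt_of_le (Nat.lt_succ_self j) ((Nat.le_div_iff_mul_le hm).mpr h4)
    · rintro ⟨j, hj, rfl⟩
      have hj' : (j+1) * m ≤ n + m - r := (Nat.le_div_iff_mul_le hm).mp hj
      have hj'' : j * m + m ≤ n + m - r := by nlinarith
      have hmj : m * j = j * m := Nat.mul_comm m j
      refine ⟨⟨by omega, by omega⟩, ?_⟩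
      simp [Nat.add_mul_mod_self_left]
  rw [himage, Finset.card_image_of_injective _ (fun a b hab => Nat.eq_of_mul_eq_mul_left hm (by omega)),
    Finset.card_range]

lemma pointwise_cs (a x : ℤ) : (2*a+1)*x ≤ x^2 + a*(a+1) := by
  rcases le_or_gt x a with h | h
  · nlinarith
  · have : a + 1 ≤ x := h
    nlinarith

lemma class_bound (k : ℕ) (hk : 2 ≤ k) (c : ℕ → Fin k) (S : Finset ℕ) :
    (k:ℤ) * (2 * (((S ×ˢ S).filter (fun q : ℕ × ℕ => q.1 < q.2 ∧ c q.1 ≠ c q.2)).card : ℤ))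
      ≤ ((k:ℤ)-1) * (S.card:ℤ)^2
        - ((S.card % k : ℕ) : ℤ) * ((k:ℤ) - ((S.card % k : ℕ) : ℤ)) := by
  classical
  set D := (S ×ˢ S).filter (fun q : ℕ × ℕ => c q.1 ≠ c q.2) with hD
  -- step 1 : 2 * card(filter <) = card D
  have step1 : 2 * ((S ×ˢ S).filter (fun q : ℕ × ℕ => q.1 < q.2 ∧ c q.1 ≠ c q.2)).card
      ≤ D.card := by
    have hsub : (S ×ˢ S).filter (fun q : ℕ × ℕ => q.1 < q.2 ∧ c q.1 ≠ c q.2)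
        = D.filter (fun q => q.1 < q.2) := by
      rw [hD, Finset.filter_filter]
      apply Finset.filter_congr
      intro x _; tauto
    have hcards : (D.filter (fun q => q.1 < q.2)).card
        = (D.filter (fun q => ¬ q.1 < q.2)).card := by
      apply Finset.card_bij' (i := fun q _ => (q.2, q.1)) (j := fun q _ => (q.2, q.1))
        (hi := ?_) (hj := ?_) (left_inv := ?_) (right_inv := ?_)
      · intro q hq
        simp only [hD, mem_filter, mem_product, Finset.mem_filter] at hq ⊢
        exact ⟨⟨⟨hq.1.1.2, hq.1.1.1⟩, fun h => hq.1.2 h.symm⟩, by omega⟩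
      · intro q hq
        simp only [hD, mem_filter, mem_product, Finset.mem_filter] at hq ⊢
        have hne : q.1 ≠ q.2 := fun h => hq.1.2 (by rw [h])
        exact ⟨⟨⟨hq.1.1.2, hq.1.1.1⟩, fun h => hq.1.2 h.symm⟩, by omega⟩
      · intro q _; rfl
      · intro q _; rfl
    have := Finset.card_filter_add_card_filter_not
      (s := D) (p := fun q : ℕ × ℕ => q.1 < q.2)
    have hc := congrArg Finset.card hsub
    omega
  -- step 2 : card D + ∑ m_t^2 = s^2
  have step2 : D.card + ∑ t : Fin k, ((S.filter (fun i => c i = t)).card)^2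
      = S.card^2 := by
    have hsplit := Finset.card_filter_add_card_filter_not
      (s := S ×ˢ S) (p := fun q : ℕ × ℕ => c q.1 = c q.2)
    have hEcard : ((S ×ˢ S).filter (fun q : ℕ × ℕ => c q.1 = c q.2)).card
        = ∑ t : Fin k, ((S.filter (fun i => c i = t)).card)^2 := by
      rw [Finset.card_eq_sum_card_fiberwise
        (f := fun q : ℕ × ℕ => c q.1) (t := Finset.univ) (fun x _ => Finset.mem_univ _)]
      apply Finset.sum_congr rfl
      intro t _
      have : ((S ×ˢ S).filter (fun q : ℕ × ℕ => c q.1 = c q.2)).filter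
          (fun q : ℕ × ℕ => c q.1 = t)
          = (S.filter (fun i => c i = t)) ×ˢ (S.filter (fun i => c i = t)) := by
        ext q
        simp only [Finset.mem_filter, Finset.mem_product]
        constructor
        · rintro ⟨⟨⟨h1, h2⟩, h3⟩, h4⟩
          exact ⟨⟨h1, h4⟩, h2, h3 ▸ h4⟩
        · rintro ⟨⟨h1, h2⟩, h3, h4⟩
          exact ⟨⟨⟨h1, h3⟩, by rw [h2, h4]⟩, h2⟩
      rw [Finset.filter_filter] at this ⊢
      rw [this, Finset.card_product, sq]
    have hDcard : D.card = ((S ×ˢ S).filter (fun q : ℕ × ℕ => ¬ c q.1 = c q.2)).card := rfl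
    rw [hDcard, ← hEcard]
    have : (S ×ˢ S).card = S.card ^ 2 := by rw [Finset.card_product, sq]
    omega
  -- step 3 : ∑ m_t = s
  have step3 : ∑ t : Fin k, (S.filter (fun i => c i = t)).card = S.card := by
    exact (Finset.card_eq_sum_card_fiberwise
      (f := fun i => c i) (t := Finset.univ) (fun x _ => Finset.mem_univ _)).symm
  -- step 4 : Cauchy-Schwarz with integrality
  set a : ℤ := ((S.card / k : ℕ) : ℤ)
  set b : ℤ := ((S.card % k : ℕ) : ℤ)
  have step4 : (2*a+1) * (S.card : ℤ) - a*(a+1)*k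
      ≤ ∑ t : Fin k, (((S.filter (fun i => c i = t)).card : ℤ))^2 := by
    have h1 : ∑ t : Fin k, (2*a+1) * (((S.filter (fun i => c i = t)).card : ℤ))
        ≤ ∑ t : Fin k, ((((S.filter (fun i => c i = t)).card : ℤ))^2 + a*(a+1)) := by
      apply Finset.sum_le_sum
      intro t _
      exact pointwise_cs a _
    rw [← Finset.mul_sum, Finset.sum_add_distrib, Finset.sum_const,
      Finset.card_univ, Fintype.card_fin] at h1
    have h2 : ∑ t : Fin k, (((S.filter (fun i => c i = t)).card : ℤ))
        = (S.card : ℤ) := by exact_mod_cast step3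
    rw [h2, nsmul_eq_mul] at h1
    linarith
  -- combine
  have hab : (S.card : ℤ) = a * k + b := by
    have h := Nat.div_add_mod S.card k
    rw [Nat.mul_comm] at h
    simp only [a, b]
    exact_mod_cast (by omega : (S.card : ℤ) = ((S.card / k) * k : ℕ) + (S.card % k : ℕ))
  have hblt : b < k := by
    have := Nat.mod_lt S.card (show 0 < k by omega)
    simp only [b]
    exact_mod_cast this
  have hbge : 0 ≤ b := by positivity
  have hchain : (2 * (((S ×ˢ S).filter (fun q : ℕ × ℕ => q.1 < q.2 ∧ c q.1 ≠ c q.2)).card : ℤ))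
      ≤ (S.card:ℤ)^2 - ((2*a+1) * (S.card : ℤ) - a*(a+1)*k) := by
    have c1 : (D.card : ℤ) + ∑ t : Fin k, (((S.filter (fun i => c i = t)).card : ℤ))^2
        = (S.card:ℤ)^2 := by exact_mod_cast congrArg (Nat.cast : ℕ → ℤ) step2
    have c2 : (2 * (((S ×ˢ S).filter (fun q : ℕ × ℕ => q.1 < q.2 ∧ c q.1 ≠ c q.2)).card : ℤ))
        ≤ (D.card : ℤ) := by exact_mod_cast step1
    linarith
  have key : (k:ℤ) * ((S.card:ℤ)^2 - ((2*a+1) * (S.card : ℤ) - a*(a+1)*k))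
      = ((k:ℤ)-1) * (S.card:ℤ)^2 - b * ((k:ℤ) - b) := by
    rw [hab]; ring
  calc (k:ℤ) * (2 * (((S ×ˢ S).filter (fun q : ℕ × ℕ => q.1 < q.2 ∧ c q.1 ≠ c q.2)).card : ℤ))
      ≤ (k:ℤ) * ((S.card:ℤ)^2 - ((2*a+1) * (S.card : ℤ) - a*(a+1)*k)) := by
        apply mul_le_mul_of_nonneg_left hchain (by positivity)
    _ = _ := key

lemma succ_mod (q k : ℕ) (hk : 2 ≤ k) :
    (q + 1) % k = if q % k = k - 1 then 0 else q % k + 1 := by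
  rcases eq_or_ne (q % k) (k-1) with h | h
  · simp only [h, if_true]
    rw [Nat.add_mod, h]
    have h1 : 1 % k = 1 := Nat.mod_eq_of_lt (by omega)
    rw [h1]
    have : k - 1 + 1 = k := by omega
    rw [this, Nat.mod_self]
  · simp only [h, if_false]
    have hlt : q % k < k := Nat.mod_lt _ (by omega)
    have hlt2 : q % k + 1 < k := by omega
    rw [Nat.add_mod]
    have h1 : 1 % k = 1 := Nat.mod_eq_of_lt (by omega)
    rw [h1, Nat.mod_eq_of_lt hlt2]

lemma div_shift (m n q t r : ℕ) (hm : 0 < m) (hq : q = n / m) (ht : t = n % m)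
    (h1 : 1 ≤ r) (h2 : r ≤ m) :
    (n + m - r) / m = if r ≤ t then q + 1 else q := by
  have htm : t < m := ht ▸ Nat.mod_lt _ hm
  have hn : n = m * q + t := by rw [hq, ht]; exact (Nat.div_add_mod n m).symm
  have hexp : n + m - r = (t + m - r) + m * q := by omega
  rw [hexp, Nat.add_mul_div_left _ _ hm]
  rcases le_or_gt r t with h | h
  · have hone : (t + m - r) / m = 1 := by
      apply Nat.div_eq_of_lt_le <;> omega
    have h' : r ≤ t := h
    rw [hone, if_pos h']
    omega
  · have hzero : (t + m - r) / m = 0 := Nat.div_eq_of_lt (by omega)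
    have h' : ¬ r ≤ t := by omega
    rw [hzero, if_neg h']
    omega

lemma key2 (k m t b0 : ℤ) (hm : m = k - 1) (ht : 0 ≤ t) (htm : t ≤ m-1)
    (h0 : 0 ≤ b0) (h2 : b0 ≤ k-2) :
    t*(m-t) ≤ t*((b0+1)*(k-(b0+1))) + (m-t)*(b0*(k-b0)) := by
  have hB1 : k - 1 ≤ (b0+1) * (k - (b0+1)) := by nlinarith
  have hB0 : 0 ≤ b0 * (k - b0) := by nlinarith
  have h3 : t * (k-1) ≤ t * ((b0+1) * (k - (b0+1))) :=
    mul_le_mul_of_nonneg_left hB1 ht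
  have h4 : 0 ≤ (m-t) * (b0 * (k-b0)) := mul_nonneg (by omega) hB0
  nlinarith [h3, h4]

lemma final_ineq (k m q t B0 B1 : ℤ) (hm : m = k-1) (ht : 0 ≤ t)
    (htm : t ≤ m-1) (hkey : t * (m - t) ≤ t * B1 + (m - t) * B0) :
    t * ((k-1)*(q+1)^2 - B1) + (m-t) * ((k-1)*q^2 - B0) ≤ (m*q+t)^2 := by
  have hk : k = m + 1 := by omega
  subst hk
  nlinarith [hkey]

lemma Fsum_bound (k m n : ℕ) (hk : 2 ≤ k) (hm : m = k - 1) :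
    ∑ r ∈ Finset.Icc 1 m, (((k:ℤ)-1) * ((((n + m - r)/m : ℕ)):ℤ)^2
      - (((((n + m - r)/m) % k : ℕ)):ℤ) * ((k:ℤ) - (((((n + m - r)/m) % k : ℕ)):ℤ)))
      ≤ (n:ℤ)^2 := by
  have hm0 : 0 < m := by omega
  set q := n / m with hq
  set t := n % m with ht
  have htm : t < m := Nat.mod_lt _ hm0
  have hud : m * q + t = n := Nat.div_add_mod n m
  set g : ℕ → ℤ := fun s => ((k:ℤ)-1) * ((s:ℤ))^2
      - (((s % k : ℕ)):ℤ) * ((k:ℤ) - (((s % k : ℕ)):ℤ)) with hg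
  have hcong : ∑ r ∈ Finset.Icc 1 m, g ((n + m - r)/m)
      = ∑ r ∈ Finset.Icc 1 m, (if r ≤ t then g (q+1) else g q) := by
    apply Finset.sum_congr rfl
    intro r hr
    rw [Finset.mem_Icc] at hr
    rw [div_shift m n q t r hm0 hq ht hr.1 hr.2]
    split <;> rfl
  rw [hcong, Finset.sum_ite, Finset.sum_const, Finset.sum_const]
  have hcard1 : ((Finset.Icc 1 m).filter (fun r => r ≤ t)).card = t := by
    have : (Finset.Icc 1 m).filter (fun r => r ≤ t) = Finset.Icc 1 t := by
      ext r; simp only [Finset.mem_filter, Finset.mem_Icc]; omega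
    rw [this, Nat.card_Icc]; omega
  have hcard2 : ((Finset.Icc 1 m).filter (fun r => ¬ r ≤ t)).card = m - t := by
    have : (Finset.Icc 1 m).filter (fun r => ¬ r ≤ t) = Finset.Icc (t+1) m := by
      ext r; simp only [Finset.mem_filter, Finset.mem_Icc]; omega
    rw [this, Nat.card_Icc]; omega
  rw [hcard1, hcard2, nsmul_eq_mul, nsmul_eq_mul]
  simp only [hg]
  have hmt : ((m - t : ℕ) : ℤ) = (m:ℤ) - (t:ℤ) := by omega
  have hq1 : (((q+1) : ℕ) : ℤ) = (q:ℤ) + 1 := by push_cast; ring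
  have hn : (n:ℤ) = (m:ℤ) * q + t := by exact_mod_cast hud.symm
  have hmk : (m:ℤ) = (k:ℤ) - 1 := by omega
  rw [hmt, hq1, hn]
  apply final_ineq (k:ℤ) (m:ℤ) (q:ℤ) (t:ℤ) _ _ hmk (by positivity) (by omega)
  -- key inequality, by cases
  have hsucc := succ_mod q k hk
  have hb0r : q % k < k := Nat.mod_lt _ (by omega)
  rcases eq_or_ne (q % k) (k-1) with hcase | hcase
  · have hb1 : (q+1) % k = 0 := by rw [hsucc, if_pos hcase]
    have hb0 : ((q % k : ℕ) : ℤ) = (k:ℤ) - 1 := by omega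
    rw [hb1, hb0]
    push_cast
    nlinarith [sq_nonneg ((m:ℤ) - t)]
  · have hb1 : (q+1) % k = q % k + 1 := by rw [hsucc, if_neg hcase]
    have hb1' : (((q+1) % k : ℕ) : ℤ) = ((q % k : ℕ) : ℤ) + 1 := by omega
    rw [hb1']
    exact key2 (k:ℤ) (m:ℤ) (t:ℤ) _ hmk (by positivity) (by omega)
      (by positivity) (by omega)

lemma total_card_eq (m n : ℕ) :
    (((Finset.Icc 1 n ×ˢ Finset.Icc 1 n).filter
      (fun p : ℕ × ℕ => p.1 + m * p.2 ≤ n)).card : ℕ)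
    = ∑ d ∈ Finset.Icc 1 n, (n - m * d) := by
  rw [Finset.card_eq_sum_card_fiberwise
    (f := fun p : ℕ × ℕ => p.2) (t := Finset.Icc 1 n)
    (fun x hx => by
      simp only [Finset.mem_coe, Finset.mem_filter, Finset.mem_product] at hx
      exact hx.1.2)]
  apply Finset.sum_congr rfl
  intro d hd
  have hset : ((Finset.Icc 1 n ×ˢ Finset.Icc 1 n).filter
      (fun p : ℕ × ℕ => p.1 + m * p.2 ≤ n)).filter (fun p => p.2 = d)
      = (Finset.Icc 1 (n - m * d)).image (fun x => (x, d)) := by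
    ext ⟨x, y⟩
    simp only [Finset.mem_filter, Finset.mem_product, Finset.mem_Icc,
      Finset.mem_image, Finset.mem_Icc]
    constructor
    · rintro ⟨⟨⟨h1, h2⟩, h3⟩, h4⟩
      subst h4
      exact ⟨x, ⟨h1.1, by omega⟩, rfl⟩
    · rintro ⟨x', ⟨hx1, hx2⟩, h⟩
      rw [Prod.ext_iff] at h
      obtain ⟨rfl, rfl⟩ : x' = x ∧ d = y := by simpa using h
      simp only [Finset.mem_Icc] at hd
      refine ⟨⟨⟨⟨hx1, by omega⟩, hd⟩, by omega⟩, rfl⟩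
  rw [hset, Finset.card_image_of_injective _ (fun a b hab => by
    simpa using congrArg Prod.fst hab), Nat.card_Icc]
  omega

lemma gauss_real (D : ℕ) : ∑ d ∈ Finset.Icc 1 D, (d:ℝ) = D*(D+1)/2 := by
  induction D with
  | zero => simp
  | succ n ih =>
    rw [Finset.sum_Icc_succ_top (by omega), ih]
    push_cast
    ring

lemma total_lower (m n : ℕ) (hm : 0 < m) :
    (n:ℝ)^2/(2*m) - 3*n/2
    ≤ (((Finset.Icc 1 n ×ˢ Finset.Icc 1 n).filter
      (fun p : ℕ × ℕ => p.1 + m * p.2 ≤ n)).card : ℝ) := by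
  rw [total_card_eq m n]
  set D := n / m with hD
  have hDn : D ≤ n := Nat.div_le_self n m
  have hsub : Finset.Icc 1 D ⊆ Finset.Icc 1 n := Finset.Icc_subset_Icc_right hDn
  have hmono : ∑ d ∈ Finset.Icc 1 D, ((n - m * d : ℕ) : ℝ)
      ≤ ∑ d ∈ Finset.Icc 1 n, ((n - m * d : ℕ) : ℝ) := by
    apply Finset.sum_le_sum_of_subset_of_nonneg hsub
    intro i _ _; positivity
  have hterm : ∀ d ∈ Finset.Icc 1 D, (n:ℝ) - (m:ℝ)*d ≤ ((n - m * d : ℕ) : ℝ) := by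
    intro d _
    rcases le_total (m*d) n with h | h
    · exact le_of_eq (by rw [Nat.cast_sub h]; push_cast; ring)
    · have h0 : n - m*d = 0 := by omega
      rw [h0]
      have : (n:ℝ) ≤ ((m*d : ℕ) : ℝ) := by exact_mod_cast h
      push_cast at this
      simp only [Nat.cast_zero]
      linarith
  have hsum1 : ∑ d ∈ Finset.Icc 1 D, ((n:ℝ) - (m:ℝ)*d)
      ≤ ∑ d ∈ Finset.Icc 1 D, ((n - m * d : ℕ) : ℝ) :=
    Finset.sum_le_sum hterm
  have hsum2 : ∑ d ∈ Finset.Icc 1 D, ((n:ℝ) - (m:ℝ)*d)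
      = D*(n:ℝ) - m * (D*(D+1)/2) := by
    rw [Finset.sum_sub_distrib, Finset.sum_const, ← Finset.mul_sum, gauss_real,
      Nat.card_Icc, Nat.add_sub_cancel, nsmul_eq_mul]
  have hr : n % m < m := Nat.mod_lt _ hm
  have hud : m * D + n % m = n := Nat.div_add_mod n m
  set r := n % m with hrdef
  have hudR : (m:ℝ) * D + r = n := by exact_mod_cast hud
  have hrR : (r:ℝ) ≤ (m:ℝ) - 1 := by
    have h1 : (r:ℤ) ≤ (m:ℤ) - 1 := by omega
    exact_mod_cast h1
  have hkey : (n:ℝ)^2/(2*m) - 3*n/2 ≤ D*(n:ℝ) - m * (D*(D+1)/2) := by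
    rw [div_sub' (by positivity), div_le_iff₀ (by positivity : (0:ℝ) < 2*m)]
    have hr0 : (0:ℝ) ≤ r := by positivity
    nlinarith [mul_nonneg hr0 (by linarith : (0:ℝ) ≤ (m:ℝ) - r),
      mul_nonneg (by positivity : (0:ℝ) ≤ (m:ℝ)) (by positivity : (0:ℝ) ≤ (n:ℝ))]
  have hcast : ((∑ d ∈ Finset.Icc 1 n, (n - m * d) : ℕ) : ℝ)
      = ∑ d ∈ Finset.Icc 1 n, ((n - m * d : ℕ) : ℝ) := by push_cast; rfl
  rw [hcast]
  linarith

section Main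

open Finset Classical

lemma rainbow_le (k n : ℕ) (hk : 2 ≤ k) (c : ℕ → Fin k) :
    ((((Finset.Icc 1 n ×ˢ Finset.Icc 1 n).filter
      (fun p : ℕ × ℕ => p.1 + (k - 1) * p.2 ≤ n ∧
        ∀ j j' : ℕ, j < k → j' < k → j ≠ j' →
          c (p.1 + j * p.2) ≠ c (p.1 + j' * p.2))).card : ℝ))
      ≤ (n : ℝ)^2 / (2 * k) := by
  classical
  set m := k - 1 with hm
  have hm0 : 0 < m := by omega
  set R := (Finset.Icc 1 n ×ˢ Finset.Icc 1 n).filter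
      (fun p : ℕ × ℕ => p.1 + (k - 1) * p.2 ≤ n ∧
        ∀ j j' : ℕ, j < k → j' < k → j ≠ j' →
          c (p.1 + j * p.2) ≠ c (p.1 + j' * p.2)) with hR
  set P := (Finset.Icc 1 n ×ˢ Finset.Icc 1 n).filter
      (fun q : ℕ × ℕ => q.1 < q.2 ∧ q.1 % m = q.2 % m ∧ c q.1 ≠ c q.2) with hP
  -- step 1: injection
  have h1 : R.card ≤ P.card := by
    apply Finset.card_le_card_of_injOn (fun p => (p.1, p.1 + m * p.2))
    · intro p hp
      simp only [hR, Finset.mem_coe, Finset.mem_filter, Finset.mem_product, Finset.mem_Icc] at hp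
      obtain ⟨⟨⟨hp11, hp12⟩, hp21, hp22⟩, hle, hcol⟩ := hp
      have hcol' : c p.1 ≠ c (p.1 + m * p.2) := by
        have := hcol 0 m (by omega) (by omega) (by omega)
        simpa using this
      simp only [hP, Finset.mem_coe, Finset.mem_filter, Finset.mem_product, Finset.mem_Icc]
      refine ⟨⟨⟨hp11, hp12⟩, by omega, hle⟩, ?_, ?_, hcol'⟩
      · have : 0 < m * p.2 := Nat.mul_pos hm0 (by omega)
        omega
      · exact (Nat.add_mul_mod_self_left p.1 m p.2).symm
    · intro p hp q hq hpq
      have hpq' : (p.1, p.1 + m * p.2) = (q.1, q.1 + m * q.2) := hpq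
      rw [Prod.mk.injEq] at hpq'
      obtain ⟨h1, h2⟩ := hpq'
      have h3 : m * p.2 = m * q.2 := by omega
      have h4 : p.2 = q.2 := Nat.eq_of_mul_eq_mul_left hm0 h3
      exact Prod.ext h1 h4
  -- step 2: fiberwise
  have h2 : P.card = ∑ r ∈ Finset.Icc 1 m,
      (P.filter (fun q : ℕ × ℕ => (if q.1 % m = 0 then m else q.1 % m) = r)).card := by
    apply Finset.card_eq_sum_card_fiberwise
    intro q hq
    simp only [Finset.mem_coe, Finset.mem_Icc]
    have := Nat.mod_lt q.1 hm0
    split <;> omega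
  -- step 3: per fiber bound
  have h3 : ∀ r ∈ Finset.Icc 1 m,
      (k:ℤ) * (2 * ((P.filter (fun q : ℕ × ℕ =>
          (if q.1 % m = 0 then m else q.1 % m) = r)).card : ℤ))
      ≤ ((k:ℤ)-1) * ((((n + m - r)/m : ℕ)):ℤ)^2
        - (((((n + m - r)/m) % k : ℕ)):ℤ) * ((k:ℤ) - (((((n + m - r)/m) % k : ℕ)):ℤ)) := by
    intro r hr
    rw [Finset.mem_Icc] at hr
    set S := (Finset.Icc 1 n).filter (fun i => i % m = r % m) with hS
    have hsub : P.filter (fun q : ℕ × ℕ =>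
        (if q.1 % m = 0 then m else q.1 % m) = r)
        ⊆ (S ×ˢ S).filter (fun q : ℕ × ℕ => q.1 < q.2 ∧ c q.1 ≠ c q.2) := by
      intro q hq
      simp only [hP, Finset.mem_filter, Finset.mem_product] at hq
      obtain ⟨⟨⟨hq1, hq2⟩, hlt, hmod, hcol⟩, hfib⟩ := hq
      have hq1m : q.1 % m = r % m := by
        rcases eq_or_ne (q.1 % m) 0 with h | h
        · rw [if_pos h] at hfib
          rw [h, ← hfib, Nat.mod_self]
        · rw [if_neg h] at hfib
          have : q.1 % m < m := Nat.mod_lt _ hm0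
          rw [← hfib, Nat.mod_eq_of_lt this]
      simp only [Finset.mem_filter, Finset.mem_product, hS]
      exact ⟨⟨⟨hq1, hq1m⟩, hq2, by rw [← hmod, hq1m]⟩, hlt, hcol⟩
    have hcard : S.card = (n + m - r)/m := by
      rw [hS]; exact class_card m n r hm0 hr.1 hr.2
    calc (k:ℤ) * (2 * ((P.filter (fun q : ℕ × ℕ =>
          (if q.1 % m = 0 then m else q.1 % m) = r)).card : ℤ))
        ≤ (k:ℤ) * (2 * (((S ×ˢ S).filter
            (fun q : ℕ × ℕ => q.1 < q.2 ∧ c q.1 ≠ c q.2)).card : ℤ)) := by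
          have hc := Finset.card_le_card hsub
          have hc2 : ((P.filter (fun q : ℕ × ℕ =>
              (if q.1 % m = 0 then m else q.1 % m) = r)).card : ℤ)
              ≤ (((S ×ˢ S).filter
                (fun q : ℕ × ℕ => q.1 < q.2 ∧ c q.1 ≠ c q.2)).card : ℤ) := by
            exact_mod_cast hc
          have hk0 : (0:ℤ) ≤ (k:ℤ) := by positivity
          exact mul_le_mul_of_nonneg_left
            (mul_le_mul_of_nonneg_left hc2 (by norm_num)) hk0
      _ ≤ ((k:ℤ)-1) * ((S.card):ℤ)^2
            - ((S.card % k : ℕ):ℤ) * ((k:ℤ) - ((S.card % k : ℕ):ℤ)) :=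
          class_bound k hk c S
      _ = _ := by rw [hcard]
  -- combine in ℤ
  have h4 : (k:ℤ) * (2 * (R.card : ℤ)) ≤ (n:ℤ)^2 := by
    have hsum : (k:ℤ) * (2 * (P.card : ℤ))
        = ∑ r ∈ Finset.Icc 1 m, (k:ℤ) * (2 * ((P.filter (fun q : ℕ × ℕ =>
            (if q.1 % m = 0 then m else q.1 % m) = r)).card : ℤ)) := by
      rw [← Finset.mul_sum]
      congr 1
      rw [← Finset.mul_sum]
      congr 1
      rw [← Nat.cast_sum]
      exact_mod_cast congrArg (Nat.cast : ℕ → ℤ) h2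
    have hsum2 := Finset.sum_le_sum h3
    have hfs := Fsum_bound k m n hk hm
    have hRP : (k:ℤ) * (2 * (R.card : ℤ)) ≤ (k:ℤ) * (2 * (P.card : ℤ)) := by
      have hk0 : (0:ℤ) ≤ (k:ℤ) := by positivity
      have h1' : ((R.card : ℤ)) ≤ (P.card : ℤ) := by exact_mod_cast h1
      exact mul_le_mul_of_nonneg_left
        (mul_le_mul_of_nonneg_left h1' (by norm_num)) hk0
    calc (k:ℤ) * (2 * (R.card : ℤ)) ≤ (k:ℤ) * (2 * (P.card : ℤ)) := hRP
      _ = _ := hsum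
      _ ≤ ∑ r ∈ Finset.Icc 1 m, (((k:ℤ)-1) * ((((n + m - r)/m : ℕ)):ℤ)^2
        - (((((n + m - r)/m) % k : ℕ)):ℤ) * ((k:ℤ) - (((((n + m - r)/m) % k : ℕ)):ℤ))) := hsum2
      _ ≤ (n:ℤ)^2 := hfs
  -- conclude in ℝ
  rw [le_div_iff₀ (by positivity : (0:ℝ) < 2 * k)]
  have h5 : (((k:ℤ) * (2 * (R.card : ℤ)) : ℤ) : ℝ) ≤ (((n:ℤ)^2 : ℤ) : ℝ) :=
    Int.cast_le.mpr h4
  push_cast at h5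
  linarith

end Main


/-- For every `k`-coloring `c` of `[n]`, the number of rainbow `k`-term arithmetic
progressions in `[n]` is at most `n²/(2k)`; consequently, the fraction of `k`-APs that are
rainbow is at most `(k-1)/k + o(1)`. -/

theorem rainbow_ap_upper_bound (k : ℕ) (hk : 2 ≤ k) :
    (∀ n : ℕ, ∀ c : ℕ → Fin k,
      ((((Finset.Icc 1 n ×ˢ Finset.Icc 1 n).filter
        (fun p : ℕ × ℕ => p.1 + (k - 1) * p.2 ≤ n ∧
          ∀ j j' : ℕ, j < k → j' < k → j ≠ j' →
            c (p.1 + j * p.2) ≠ c (p.1 + j' * p.2))).card : ℝ))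
        ≤ (n : ℝ)^2 / (2 * k)) ∧
    (∀ ε : ℝ, 0 < ε → ∃ N : ℕ, ∀ n : ℕ, N ≤ n → ∀ c : ℕ → Fin k,
      ((((Finset.Icc 1 n ×ˢ Finset.Icc 1 n).filter
        (fun p : ℕ × ℕ => p.1 + (k - 1) * p.2 ≤ n ∧
          ∀ j j' : ℕ, j < k → j' < k → j ≠ j' →
            c (p.1 + j * p.2) ≠ c (p.1 + j' * p.2))).card : ℝ))
        ≤ (((k : ℝ) - 1) / k + ε) *
          (((Finset.Icc 1 n ×ˢ Finset.Icc 1 n).filter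
            (fun p : ℕ × ℕ => p.1 + (k - 1) * p.2 ≤ n)).card : ℝ)) := by
  constructor
  · intro n c
    exact rainbow_le k n hk c
  · intro ε hε
    refine ⟨⌈3*(k:ℝ)*(1+ε)/ε⌉₊, fun n hn c => ?_⟩
    have hkR : (2:ℝ) ≤ (k:ℝ) := by exact_mod_cast hk
    have hk0 : (0:ℝ) < k := by linarith
    have hm0 : 0 < k - 1 := by omega
    have h1k : (1:ℕ) ≤ k := by omega
    have hcast : ((k-1:ℕ):ℝ) = (k:ℝ) - 1 := by
      rw [Nat.cast_sub h1k, Nat.cast_one]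
    have hT := total_lower (k-1) n hm0
    rw [hcast] at hT
    set M : ℝ := (k:ℝ) - 1 with hMdef
    have hM1 : (1:ℝ) ≤ M := by simp only [hMdef]; linarith
    have hM0 : (0:ℝ) < M := by linarith
    have hrb := rainbow_le k n hk c
    have hnR : 3*(k:ℝ)*(1+ε)/ε ≤ (n:ℝ) := by
      calc 3*(k:ℝ)*(1+ε)/ε ≤ (⌈3*(k:ℝ)*(1+ε)/ε⌉₊ : ℝ) := Nat.le_ceil _
        _ ≤ (n:ℝ) := by exact_mod_cast hn
    have hεn : 3*(k:ℝ)*(1+ε) ≤ ε * n := by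
      rw [div_le_iff₀ hε] at hnR
      linarith
    have hn0 : (0:ℝ) ≤ (n:ℝ) := by positivity
    have hfact : (0:ℝ) ≤ M/(k:ℝ) + ε :=
      add_nonneg (div_nonneg (by linarith) (by linarith)) hε.le
    have hstep : (n:ℝ)^2/(2*k) ≤ (M/(k:ℝ) + ε) * ((n:ℝ)^2/(2*M) - 3*n/2) := by
      have expand : (M/(k:ℝ) + ε) * ((n:ℝ)^2/(2*M) - 3*(n:ℝ)/2)
          = (n:ℝ)^2/(2*(k:ℝ)) + ε*(n:ℝ)^2/(2*M) - (M/(k:ℝ) + ε)*(3*(n:ℝ)/2) := by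
        field_simp
      have hMk : M/(k:ℝ) ≤ 1 := div_le_one_of_le₀ (by linarith) (by linarith)
      have h2 : (M/(k:ℝ) + ε)*(3*(n:ℝ)/2) ≤ (1+ε)*(3*(n:ℝ)/2) := by
        apply mul_le_mul_of_nonneg_right _ (by positivity)
        linarith
      have hstep1 : 3*M*(1+ε) ≤ ε * n := by nlinarith
      have h3 : (1+ε)*(3*(n:ℝ)/2) ≤ ε*(n:ℝ)^2/(2*M) := by
        rw [le_div_iff₀ (by positivity : (0:ℝ) < 2*M)]
        nlinarith [mul_le_mul_of_nonneg_left hstep1 hn0]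
      rw [expand]
      linarith
    calc ((((Finset.Icc 1 n ×ˢ Finset.Icc 1 n).filter
        (fun p : ℕ × ℕ => p.1 + (k - 1) * p.2 ≤ n ∧
          ∀ j j' : ℕ, j < k → j' < k → j ≠ j' →
            c (p.1 + j * p.2) ≠ c (p.1 + j' * p.2))).card : ℝ))
        ≤ (n : ℝ)^2 / (2 * k) := hrb
      _ ≤ (M/(k:ℝ) + ε) * ((n:ℝ)^2/(2*M) - 3*n/2) := hstep
      _ ≤ (M/(k:ℝ) + ε) * (((Finset.Icc 1 n ×ˢ Finset.Icc 1 n).filter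
            (fun p : ℕ × ℕ => p.1 + (k - 1) * p.2 ≤ n)).card : ℝ) :=
          mul_le_mul_of_nonneg_left hT hfact
      _ = (((k : ℝ) - 1) / k + ε) * (((Finset.Icc 1 n ×ˢ Finset.Icc 1 n).filter
            (fun p : ℕ × ℕ => p.1 + (k - 1) * p.2 ≤ n)).card : ℝ) := rfl
end

section
/- For real numbers α, β, γ with 0 ≤ α, β ≤ 1 and γ = 0.077102, if α²/2 - α³/3 - (α + β/2 - 1)·γ·β - 1/10 ≥ 0 and α + β ≥ 1 - 2γ, then 1/2 - α²/2 - β·γ < 0.33328. -/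
/-- Final optimization step: for `0 ≤ α, β ≤ 1` and `γ = 0.077102`, the constraints
`α²/2 - α³/3 - (α + β/2 - 1)γβ - 1/10 ≥ 0` and `α + β ≥ 1 - 2γ` imply
`1/2 - α²/2 - βγ < 0.33328`. -/
theorem final_optimization (α β γ : ℝ) (hα0 : 0 ≤ α) (hα1 : α ≤ 1)
    (hβ0 : 0 ≤ β) (hβ1 : β ≤ 1) (hγ : γ = 0.077102)
    (h1 : α^2 / 2 - α^3 / 3 - (α + β / 2 - 1) * γ * β - 1/10 ≥ 0)
    (h2 : α + β ≥ 1 - 2 * γ) :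
    1/2 - α^2 / 2 - β * γ < 0.33328 := by
  subst hγ
  nlinarith [sq_nonneg α, sq_nonneg β, sq_nonneg (α+β-1), sq_nonneg (α-1), sq_nonneg (α*β), mul_nonneg hα0 hβ0, sq_nonneg (α - 0.6), sq_nonneg (β - 0.4)]
end
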